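/- For every integer r ≥ 1, every f ∈ ℂ^N and every t ≥ λ_2^{−1/2}, one has K_r(f, t) ≤ ( (4/π)(r+3)^r (r+1) + (2 sin(1/2))^{−r} ) · ω_r(f, t). -/

import Mathlib

open Matrix

noncomputable section

/-- Euclidean (2-)norm on `ℂ^N`. -/
def cnorm2 {N : ℕ} (f : Fin N → ℂ) : ℝ := Real.sqrt (∑ i, ‖f i‖ ^ 2)

/-- The spectral operator `Σ_j c_j u_j u_j^*`. -/
def specOp {N : ℕ} (u : Fin N → Fin N → ℂ) (c : Fin N → ℂ) : Matrix (Fin N) (Fin N) ℂ :=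
  ∑ j, c j • Matrix.vecMulVec (u j) (star (u j))

/-- The graph translation operator `T_s = Σ_j e^{i s √λ_j} u_j u_j^*`. -/
def Tmat {N : ℕ} (u : Fin N → Fin N → ℂ) (lam : Fin N → ℝ) (s : ℝ) :
    Matrix (Fin N) (Fin N) ℂ :=
  specOp u (fun j => Complex.exp (Complex.I * (s : ℂ) * (Real.sqrt (lam j) : ℂ)))

/-- The `r`-th modulus of smoothness `ω_r(f,t) = sup_{|s| ≤ t} ‖(T_s - I)^r f‖₂`. -/
def omegaMod {N : ℕ} (u : Fin N → Fin N → ℂ) (lam : Fin N → ℝ) (r : ℕ) (f : Fin N → ℂ)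
    (t : ℝ) : ℝ :=
  ⨆ s : {s : ℝ // |s| ≤ t}, cnorm2 (((Tmat u lam s.1 - 1) ^ r).mulVec f)

/-- Functional calculus power `L^x = Σ_j λ_j^x u_j u_j^*` (with `0^0 = 1`). -/
def Lpow {N : ℕ} (u : Fin N → Fin N → ℂ) (lam : Fin N → ℝ) (x : ℝ) :
    Matrix (Fin N) (Fin N) ℂ :=
  specOp u (fun j => ((lam j ^ x : ℝ) : ℂ))

/-- The `K`-functional `K_r(f,t) = inf_g ( ‖f-g‖₂ + (t/2)^r ‖L^{r/2} g‖₂ )`. -/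
def Kfun {N : ℕ} (u : Fin N → Fin N → ℂ) (lam : Fin N → ℝ) (r : ℕ) (f : Fin N → ℂ)
    (t : ℝ) : ℝ :=
  ⨅ g : Fin N → ℂ, (cnorm2 (f - g) + (t / 2) ^ r * cnorm2 ((Lpow u lam ((r : ℝ) / 2)).mulVec g))

/-! Let `g` be the orthogonal projection of `f` onto `ker L`. Since `r ≥ 1`, `L^{r/2} g = 0`, so
`K_r(f, t) ≤ ‖f - g‖`. In the eigenbasis,
`‖(T_s - I)^r f‖² = ∑_j (2 sin (s √λ_j / 2))^{2r} |⟨u_j, f⟩|²`, and every `λ_j ≠ 0` satisfies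
`√λ_j t ≥ 1`. For such `j` the mean of `(2 sin (s √λ_j / 2))^{2r}` over `s ∈ [0, t]` is at least
`ρ_r = (15/16)^{2r} / (4π(2r+1))`, by `π`-periodicity of `sin^{2r}` and `sin x ≥ 15x/16` on
`[0, 1/2]`. Averaging over `s` gives `ρ_r ‖f - g‖² ≤ ω_r(f, t)²`, and
`ρ_r^{-1/2} ≤ (4/π)(r+3)^r(r+1)`. -/

def eigvecMatrix {N : ℕ} (u : Fin N → Fin N → ℂ) : Matrix (Fin N) (Fin N) ℂ := (Matrix.of u)ᵀ

section Spectral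

variable {N : ℕ} {u : Fin N → Fin N → ℂ}

lemma conjTranspose_eigvecMatrix_mul_self
    (hu : ∀ i j, star (u i) ⬝ᵥ u j = if i = j then 1 else 0) :
    (eigvecMatrix u)ᴴ * eigvecMatrix u = 1 := by
  ext i j
  simpa [eigvecMatrix, Matrix.mul_apply, dotProduct, Matrix.one_apply] using hu i j

lemma specOp_eq (c : Fin N → ℂ) :
    specOp u c = eigvecMatrix u * diagonal c * (eigvecMatrix u)ᴴ := by
  ext a b
  simp only [specOp, eigvecMatrix, Matrix.sum_apply, Matrix.smul_apply, vecMulVec_apply,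
    Pi.star_apply, smul_eq_mul, Matrix.mul_apply, diagonal_apply, conjTranspose_apply,
    transpose_apply, of_apply, mul_ite, mul_zero, Finset.sum_ite_eq', Finset.mem_univ, if_true]
  exact Finset.sum_congr rfl fun j _ => by ring

lemma specOp_sub (c d : Fin N → ℂ) : specOp u c - specOp u d = specOp u (c - d) := by
  simp only [specOp, ← Finset.sum_sub_distrib, Pi.sub_apply, sub_smul]

lemma specOp_one (hV : (eigvecMatrix u)ᴴ * eigvecMatrix u = 1) : specOp u 1 = 1 := by
  rw [specOp_eq, Pi.one_def, diagonal_one, Matrix.mul_one, mul_eq_one_comm.mp hV]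

lemma specOp_mul (hV : (eigvecMatrix u)ᴴ * eigvecMatrix u = 1) (c d : Fin N → ℂ) :
    specOp u c * specOp u d = specOp u (c * d) := by
  simp only [specOp_eq, Matrix.mul_assoc]
  rw [← Matrix.mul_assoc (eigvecMatrix u)ᴴ, hV, Matrix.one_mul, ← Matrix.mul_assoc (diagonal c),
    diagonal_mul_diagonal]
  rfl

lemma specOp_pow (hV : (eigvecMatrix u)ᴴ * eigvecMatrix u = 1) (c : Fin N → ℂ) (n : ℕ) :
    specOp u c ^ n = specOp u (c ^ n) := by
  induction n with
  | zero => rw [pow_zero, pow_zero, specOp_one hV]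
  | succ n ih => rw [pow_succ, ih, specOp_mul hV, pow_succ]

lemma cnorm2_nonneg (x : Fin N → ℂ) : 0 ≤ cnorm2 x := Real.sqrt_nonneg _

lemma ofReal_cnorm2_sq (x : Fin N → ℂ) : ((cnorm2 x ^ 2 : ℝ) : ℂ) = star x ⬝ᵥ x := by
  rw [cnorm2, Real.sq_sqrt (by positivity)]
  push_cast
  exact Finset.sum_congr rfl fun i _ => (Complex.conj_mul' (x i)).symm

lemma cnorm2_mulVec_of_conjTranspose_mul_self {A : Matrix (Fin N) (Fin N) ℂ} (hA : Aᴴ * A = 1)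
    (x : Fin N → ℂ) : cnorm2 (A *ᵥ x) = cnorm2 x := by
  have hsq : cnorm2 (A *ᵥ x) ^ 2 = cnorm2 x ^ 2 := by
    apply Complex.ofReal_injective
    rw [ofReal_cnorm2_sq, ofReal_cnorm2_sq, star_mulVec, ← dotProduct_mulVec, mulVec_mulVec, hA,
      one_mulVec]
  exact (pow_left_inj₀ (cnorm2_nonneg _) (cnorm2_nonneg _) two_ne_zero).mp hsq

lemma cnorm2_specOp_mulVec_sq (hV : (eigvecMatrix u)ᴴ * eigvecMatrix u = 1) (c f : Fin N → ℂ) :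
    cnorm2 (specOp u c *ᵥ f) ^ 2 = ∑ j, ‖c j‖ ^ 2 * ‖((eigvecMatrix u)ᴴ *ᵥ f) j‖ ^ 2 := by
  rw [specOp_eq, ← mulVec_mulVec, ← mulVec_mulVec,
    cnorm2_mulVec_of_conjTranspose_mul_self hV, cnorm2, Real.sq_sqrt (by positivity)]
  simp only [mulVec_diagonal, norm_mul, mul_pow]

lemma Tmat_sub_one_pow (hV : (eigvecMatrix u)ᴴ * eigvecMatrix u = 1) (lam : Fin N → ℝ) (s : ℝ)
    (r : ℕ) :
    (Tmat u lam s - 1) ^ r =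
      specOp u (fun j => (Complex.exp (Complex.I * ↑(s * √(lam j))) - 1) ^ r) := by
  rw [Tmat, ← specOp_one hV, specOp_sub, specOp_pow hV]
  congr 1
  ext j
  simp only [Pi.pow_apply, Pi.sub_apply, Pi.one_apply, Complex.ofReal_mul, mul_assoc]

lemma cnorm2_Tmat_sub_one_pow_mulVec_sq (hV : (eigvecMatrix u)ᴴ * eigvecMatrix u = 1)
    (lam : Fin N → ℝ) (r : ℕ) (s : ℝ) (f : Fin N → ℂ) :
    cnorm2 ((Tmat u lam s - 1) ^ r *ᵥ f) ^ 2 =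
      ∑ j, (2 * Real.sin (√(lam j) * s / 2)) ^ (2 * r) * ‖((eigvecMatrix u)ᴴ *ᵥ f) j‖ ^ 2 := by
  rw [Tmat_sub_one_pow hV, cnorm2_specOp_mulVec_sq hV]
  refine Finset.sum_congr rfl fun j _ => ?_
  rw [norm_pow, Complex.norm_exp_I_mul_ofReal_sub_one, Real.norm_eq_abs, ← pow_mul,
    mul_comm r 2, pow_mul, sq_abs, ← pow_mul, mul_comm s]

def kerProj (u : Fin N → Fin N → ℂ) (lam : Fin N → ℝ) : Matrix (Fin N) (Fin N) ℂ :=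
  specOp u fun j => if lam j = 0 then 1 else 0

lemma Lpow_mul_kerProj (hV : (eigvecMatrix u)ᴴ * eigvecMatrix u = 1) (lam : Fin N → ℝ) {x : ℝ}
    (hx : x ≠ 0) : Lpow u lam x * kerProj u lam = 0 := by
  have hzero : (fun j => ((lam j ^ x : ℝ) : ℂ)) * (fun j => if lam j = 0 then 1 else 0) = 0 := by
    ext j
    by_cases hj : lam j = 0 <;> simp [hj, Real.zero_rpow hx]
  rw [Lpow, kerProj, specOp_mul hV, hzero, specOp_eq, Pi.zero_def, diagonal_zero, Matrix.mul_zero,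
    Matrix.zero_mul]

lemma cnorm2_sub_kerProj_mulVec_sq (hV : (eigvecMatrix u)ᴴ * eigvecMatrix u = 1)
    (lam : Fin N → ℝ) (f : Fin N → ℂ) :
    cnorm2 (f - kerProj u lam *ᵥ f) ^ 2 =
      ∑ j, if lam j = 0 then 0 else ‖((eigvecMatrix u)ᴴ *ᵥ f) j‖ ^ 2 := by
  have hcompl : f - kerProj u lam *ᵥ f = specOp u (fun j => if lam j = 0 then 0 else 1) *ᵥ f := by
    nth_rewrite 1 [← one_mulVec f]
    rw [← specOp_one hV, kerProj, ← sub_mulVec, specOp_sub]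
    congr 2
    ext j
    by_cases hj : lam j = 0 <;> simp [hj]
  rw [hcompl, cnorm2_specOp_mulVec_sq hV]
  refine Finset.sum_congr rfl fun j _ => ?_
  split_ifs <;> simp

lemma Kfun_le_cnorm2_sub_kerProj_mulVec (hV : (eigvecMatrix u)ᴴ * eigvecMatrix u = 1)
    (lam : Fin N → ℝ) {r : ℕ} (hr : r ≠ 0) (f : Fin N → ℂ) {t : ℝ} (ht : 0 ≤ t) :
    Kfun u lam r f t ≤ cnorm2 (f - kerProj u lam *ᵥ f) := by
  have hsmooth : Lpow u lam ((r : ℝ) / 2) *ᵥ (kerProj u lam *ᵥ f) = 0 := by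
    rw [mulVec_mulVec, Lpow_mul_kerProj hV lam (by positivity), zero_mulVec]
  have hbdd : BddBelow (Set.range fun g : Fin N → ℂ =>
      cnorm2 (f - g) + (t / 2) ^ r * cnorm2 (Lpow u lam ((r : ℝ) / 2) *ᵥ g)) := by
    refine ⟨0, ?_⟩
    rintro _ ⟨g, rfl⟩
    exact add_nonneg (cnorm2_nonneg _) (mul_nonneg (by positivity) (cnorm2_nonneg _))
  calc Kfun u lam r f t
      ≤ cnorm2 (f - kerProj u lam *ᵥ f) +
          (t / 2) ^ r * cnorm2 (Lpow u lam ((r : ℝ) / 2) *ᵥ (kerProj u lam *ᵥ f)) :=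
        ciInf_le hbdd _
    _ = cnorm2 (f - kerProj u lam *ᵥ f) := by simp [hsmooth, cnorm2]

end Spectral

open Real

lemma Function.Periodic.div_mul_intervalIntegral_le {g : ℝ → ℝ} {T a Y : ℝ}
    (hg : Function.Periodic g T) (hcont : Continuous g) (hnonneg : ∀ x, 0 ≤ g x)
    (ha : 0 < a) (haT : a ≤ T) (haY : a ≤ Y) :
    Y / (2 * T) * ∫ x in 0..a, g x ≤ ∫ x in 0..Y, g x := by
  have hT : 0 < T := ha.trans_le haT
  have hmono : ∀ {x y : ℝ}, 0 ≤ x → x ≤ y → ∫ z in 0..x, g z ≤ ∫ z in 0..y, g z :=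
    fun hx hxy => intervalIntegral.integral_mono_interval le_rfl hx hxy
      (Filter.Eventually.of_forall hnonneg) (hcont.intervalIntegrable _ _)
  have ha_nonneg : 0 ≤ ∫ x in 0..a, g x :=
    intervalIntegral.integral_nonneg ha.le fun x _ => hnonneg x
  rcases le_or_gt Y (2 * T) with hY | hY
  · calc Y / (2 * T) * ∫ x in 0..a, g x ≤ 1 * ∫ x in 0..a, g x :=
          mul_le_mul_of_nonneg_right ((div_le_one (by positivity)).mpr hY) ha_nonneg
      _ ≤ ∫ x in 0..Y, g x := by rw [one_mul]; exact hmono ha.le haY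
  · -- the integral over `[0, Y]` contains `⌊Y / T⌋ ≥ Y / (2T)` full periods
    have hfloor : Y / (2 * T) ≤ ⌊Y / T⌋ := by
      have h1 : 1 < Y / (2 * T) := (one_lt_div (by positivity)).mpr hY
      have h2 : Y / T = 2 * (Y / (2 * T)) := by field_simp
      linarith [Int.sub_one_lt_floor (Y / T)]
    have hsInf : 0 ≤ sInf ((fun y => ∫ x in 0..y, g x) '' Set.Icc 0 T) :=
      Real.sInf_nonneg <| by
        rintro _ ⟨y, hy, rfl⟩
        exact intervalIntegral.integral_nonneg hy.1 fun x _ => hnonneg x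
    have hperiods := hg.sInf_add_zsmul_le_integral_of_pos (hcont.intervalIntegrable 0 T) hT Y
    rw [zsmul_eq_mul] at hperiods
    calc Y / (2 * T) * ∫ x in 0..a, g x ≤ ⌊Y / T⌋ * ∫ x in 0..T, g x :=
          mul_le_mul hfloor (hmono ha.le haT) ha_nonneg
            ((div_nonneg (by linarith) (by linarith)).trans hfloor)
      _ ≤ ∫ x in 0..Y, g x := by linarith

lemma mul_le_two_mul_sin {x : ℝ} (hx₀ : 0 ≤ x) (hx₁ : x ≤ 1 / 2) : 15 / 8 * x ≤ 2 * sin x := by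
  rcases hx₀.eq_or_lt with rfl | hx
  · simp
  · nlinarith [sin_gt_sub_cube hx, mul_le_mul hx₁ hx₁ hx.le (by norm_num : (0 : ℝ) ≤ 1 / 2)]

lemma le_integral_two_mul_sin_pow (r : ℕ) :
    (15 / 16) ^ (2 * r) / (2 * (2 * r + 1)) ≤ ∫ x in (0 : ℝ)..1 / 2, (2 * sin x) ^ (2 * r) := by
  calc (15 / 16 : ℝ) ^ (2 * r) / (2 * (2 * r + 1))
      = ∫ x in (0 : ℝ)..1 / 2, (15 / 8 * x) ^ (2 * r) := by
        simp only [mul_pow, intervalIntegral.integral_const_mul, integral_pow]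
        rw [zero_pow (Nat.succ_ne_zero _), sub_zero, pow_succ,
          show (15 / 16 : ℝ) = 15 / 8 * (1 / 2) by norm_num, mul_pow]
        push_cast
        field_simp
    _ ≤ ∫ x in (0 : ℝ)..1 / 2, (2 * sin x) ^ (2 * r) := by
        refine intervalIntegral.integral_mono_on (by norm_num)
          ((by fun_prop : Continuous _).intervalIntegrable _ _)
          ((by fun_prop : Continuous _).intervalIntegrable _ _)
          fun x hx => ?_
        exact pow_le_pow_left₀ (by linarith [hx.1]) (mul_le_two_mul_sin hx.1 hx.2) _

def sinMeanBound (r : ℕ) : ℝ := (15 / 16) ^ (2 * r) / (4 * π * (2 * r + 1))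

lemma mul_sinMeanBound_le_integral (r : ℕ) {θ t : ℝ} (hθ : 0 < θ) (hθt : 1 ≤ θ * t) :
    t * sinMeanBound r ≤ ∫ s in 0..t, (2 * sin (θ * s / 2)) ^ (2 * r) := by
  have hperiodic : Function.Periodic (fun x => (2 * sin x) ^ (2 * r)) π := fun x => by
    simp only [sin_add_pi, mul_neg, (even_two_mul r).neg_pow]
  have hmean := hperiodic.div_mul_intervalIntegral_le (by fun_prop)
    (fun x => (even_two_mul r).pow_nonneg _) (by norm_num) (by linarith [pi_gt_three])
    (by linarith : 1 / 2 ≤ θ / 2 * t)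
  have hsubst : ∫ s in 0..t, (2 * sin (θ * s / 2)) ^ (2 * r) =
      (θ / 2)⁻¹ * ∫ x in 0..θ / 2 * t, (2 * sin x) ^ (2 * r) := by
    simp_rw [show ∀ s, θ * s / 2 = θ / 2 * s from fun s => by ring]
    rw [intervalIntegral.integral_comp_mul_left (fun x => (2 * sin x) ^ (2 * r)) (by positivity),
      mul_zero, smul_eq_mul]
  rw [hsubst]
  calc t * sinMeanBound r
      = (θ / 2)⁻¹ * (θ / 2 * t / (2 * π) * ((15 / 16) ^ (2 * r) / (2 * (2 * r + 1)))) := by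
        rw [sinMeanBound]
        field_simp
        ring
    _ ≤ (θ / 2)⁻¹ * ∫ x in 0..θ / 2 * t, (2 * sin x) ^ (2 * r) := by
        refine mul_le_mul_of_nonneg_left (le_trans ?_ hmean) (by positivity)
        exact mul_le_mul_of_nonneg_left (le_integral_two_mul_sin_pow r)
          (div_nonneg (by linarith) (by positivity))

section Modulus

variable {N : ℕ} {u : Fin N → Fin N → ℂ}

lemma cnorm2_le_omegaMod (hV : (eigvecMatrix u)ᴴ * eigvecMatrix u = 1) (lam : Fin N → ℝ)
    (r : ℕ) (f : Fin N → ℂ) {s t : ℝ} (hs : |s| ≤ t) :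
    cnorm2 ((Tmat u lam s - 1) ^ r *ᵥ f) ≤ omegaMod u lam r f t := by
  refine le_ciSup (f := fun s : {s : ℝ // |s| ≤ t} => cnorm2 ((Tmat u lam s.1 - 1) ^ r *ᵥ f))
    ⟨√(∑ j, 4 ^ r * ‖((eigvecMatrix u)ᴴ *ᵥ f) j‖ ^ 2), ?_⟩ ⟨s, hs⟩
  rintro _ ⟨s', rfl⟩
  refine (le_abs_self _).trans (Real.abs_le_sqrt ?_)
  rw [cnorm2_Tmat_sub_one_pow_mulVec_sq hV]
  gcongr with j
  rw [pow_mul]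
  exact pow_le_pow_left₀ (sq_nonneg _) (by nlinarith [sin_sq_le_one (√(lam j) * s' / 2)]) r

lemma sinMeanBound_mul_cnorm2_sub_kerProj_mulVec_sq_le
    (hV : (eigvecMatrix u)ᴴ * eigvecMatrix u = 1) (lam : Fin N → ℝ) (r : ℕ) (f : Fin N → ℂ)
    {t : ℝ} (ht : 0 < t) (hgap : ∀ j, lam j ≠ 0 → 1 ≤ √(lam j) * t) :
    sinMeanBound r * cnorm2 (f - kerProj u lam *ᵥ f) ^ 2 ≤ omegaMod u lam r f t ^ 2 := by
  set b : Fin N → ℝ := fun j => ‖((eigvecMatrix u)ᴴ *ᵥ f) j‖ ^ 2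
  have hF : (fun s => cnorm2 ((Tmat u lam s - 1) ^ r *ᵥ f) ^ 2) =
      fun s => ∑ j, (2 * sin (√(lam j) * s / 2)) ^ (2 * r) * b j :=
    funext fun s => cnorm2_Tmat_sub_one_pow_mulVec_sq hV lam r s f
  refine le_of_mul_le_mul_left ?_ ht
  calc t * (sinMeanBound r * cnorm2 (f - kerProj u lam *ᵥ f) ^ 2)
      = ∑ j, (if lam j = 0 then 0 else t * sinMeanBound r) * b j := by
        rw [cnorm2_sub_kerProj_mulVec_sq hV, Finset.mul_sum, Finset.mul_sum]
        refine Finset.sum_congr rfl fun j _ => ?_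
        split_ifs <;> ring
    _ ≤ ∑ j, (∫ s in 0..t, (2 * sin (√(lam j) * s / 2)) ^ (2 * r)) * b j := by
        gcongr with j
        split_ifs with hj
        · exact intervalIntegral.integral_nonneg ht.le fun s _ => (even_two_mul r).pow_nonneg _
        · have hθt := hgap j hj
          have hθ : 0 < √(lam j) :=
            (Real.sqrt_nonneg _).lt_of_ne fun h => by rw [← h, zero_mul] at hθt; linarith
          exact mul_sinMeanBound_le_integral r hθ hθt
    _ = ∫ s in 0..t, cnorm2 ((Tmat u lam s - 1) ^ r *ᵥ f) ^ 2 := by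
        rw [hF, intervalIntegral.integral_finsetSum fun j _ =>
          (by fun_prop : Continuous _).intervalIntegrable _ _]
        simp_rw [intervalIntegral.integral_mul_const]
    _ ≤ ∫ _ in 0..t, omegaMod u lam r f t ^ 2 := by
        refine intervalIntegral.integral_mono_on ht.le ?_ intervalIntegrable_const fun s hs => ?_
        · rw [hF]
          exact (by fun_prop : Continuous _).intervalIntegrable _ _
        · exact pow_le_pow_left₀ (cnorm2_nonneg _)
            (cnorm2_le_omegaMod hV lam r f (abs_le.mpr ⟨by linarith [hs.1], hs.2⟩)) 2
    _ = t * omegaMod u lam r f t ^ 2 := by simp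

lemma omegaMod_nonneg (hV : (eigvecMatrix u)ᴴ * eigvecMatrix u = 1) (lam : Fin N → ℝ) (r : ℕ)
    (f : Fin N → ℂ) {t : ℝ} (ht : 0 ≤ t) : 0 ≤ omegaMod u lam r f t :=
  (cnorm2_nonneg _).trans (cnorm2_le_omegaMod hV lam r f (s := 0) (by simpa using ht))

end Modulus

lemma one_le_sq_mul_sinMeanBound {r : ℕ} (hr : 1 ≤ r) :
    1 ≤ (4 / π * ((r : ℝ) + 3) ^ r * ((r : ℝ) + 1)) ^ 2 * sinMeanBound r := by
  have hr' : (1 : ℝ) ≤ r := by exact_mod_cast hr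
  have hπ := pi_pos
  have hπ3 : π ^ 3 < 32 := by nlinarith [pi_lt_d2, mul_pos hπ hπ]
  have hbase : (15 / 4 : ℝ) ^ 2 ≤ ((r + 3) * (15 / 16)) ^ (2 * r) :=
    calc (15 / 4 : ℝ) ^ 2 ≤ (15 / 4) ^ (2 * r) := pow_le_pow_right₀ (by norm_num) (by omega)
      _ ≤ ((r + 3) * (15 / 16)) ^ (2 * r) := pow_le_pow_left₀ (by norm_num) (by linarith) _
  have hexpand : (4 / π * ((r : ℝ) + 3) ^ r * ((r : ℝ) + 1)) ^ 2 * (15 / 16) ^ (2 * r) =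
      16 * ((r + 3) * (15 / 16)) ^ (2 * r) * (r + 1) ^ 2 / π ^ 2 := by
    rw [mul_pow ((r : ℝ) + 3)]
    field_simp
    ring
  rw [sinMeanBound, mul_div_assoc', le_div_iff₀ (by positivity), one_mul, hexpand,
    le_div_iff₀ (by positivity)]
  calc 4 * π * (2 * r + 1) * π ^ 2 = 4 * π ^ 3 * (2 * r + 1) := by ring
    _ ≤ 16 * (15 / 4) ^ 2 * ((r : ℝ) + 1) ^ 2 := by
        nlinarith [mul_lt_mul_of_pos_right hπ3 (by positivity : (0 : ℝ) < 2 * r + 1)]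
    _ ≤ 16 * ((r + 3) * (15 / 16)) ^ (2 * r) * ((r : ℝ) + 1) ^ 2 := by gcongr

lemma cnorm2_sub_kerProj_mulVec_le {N : ℕ} {u : Fin N → Fin N → ℂ}
    (hV : (eigvecMatrix u)ᴴ * eigvecMatrix u = 1) (lam : Fin N → ℝ) {r : ℕ} (hr : 1 ≤ r)
    (f : Fin N → ℂ) {t : ℝ} (ht : 0 < t) (hgap : ∀ j, lam j ≠ 0 → 1 ≤ √(lam j) * t) :
    cnorm2 (f - kerProj u lam *ᵥ f) ≤
      4 / π * ((r : ℝ) + 3) ^ r * ((r : ℝ) + 1) * omegaMod u lam r f t := by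
  set C := 4 / π * ((r : ℝ) + 3) ^ r * ((r : ℝ) + 1)
  have hω := omegaMod_nonneg hV lam r f ht.le
  refine (pow_le_pow_iff_left₀ (cnorm2_nonneg _) (by positivity) two_ne_zero).mp ?_
  calc cnorm2 (f - kerProj u lam *ᵥ f) ^ 2
      ≤ C ^ 2 * sinMeanBound r * cnorm2 (f - kerProj u lam *ᵥ f) ^ 2 :=
        le_mul_of_one_le_left (sq_nonneg _) (one_le_sq_mul_sinMeanBound hr)
    _ ≤ C ^ 2 * omegaMod u lam r f t ^ 2 := by
        rw [mul_assoc]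
        exact mul_le_mul_of_nonneg_left
          (sinMeanBound_mul_cnorm2_sub_kerProj_mulVec_sq_le hV lam r f ht hgap) (sq_nonneg _)
    _ = (C * omegaMod u lam r f t) ^ 2 := (mul_pow _ _ _).symm

lemma one_le_sqrt_mul_of_rpow_le {a b t : ℝ} (ha : 0 < a) (hab : a ≤ b)
    (ht : a ^ (-(1 : ℝ) / 2) ≤ t) : 1 ≤ √b * t := by
  rw [neg_div, Real.rpow_neg ha.le, ← Real.sqrt_eq_rpow] at ht
  have hsqrt : 0 < √a := Real.sqrt_pos.mpr ha
  calc (1 : ℝ) = √a * (√a)⁻¹ := (mul_inv_cancel₀ hsqrt.ne').symm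
    _ ≤ √b * t := mul_le_mul (Real.sqrt_le_sqrt hab) ht (by positivity) (Real.sqrt_nonneg _)

/-- For every integer `r ≥ 1`, every `f ∈ ℂ^N` and every
`t ≥ λ_2^{-1/2}`, `K_r(f, t) ≤ ( (4/π)(r+3)^r (r+1) + (2 sin(1/2))^{-r} ) · ω_r(f, t)`. -/
theorem stmt8
    (N : ℕ) (hN : 2 ≤ N)
    (u : Fin N → Fin N → ℂ)
    (hu : ∀ i j, star (u i) ⬝ᵥ u j = if i = j then 1 else 0)
    (lam : Fin N → ℝ) (hmono : Monotone lam)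
    (hlam0 : lam ⟨0, by omega⟩ = 0) (hlam1 : 0 < lam ⟨1, by omega⟩)
    (r : ℕ) (hr : 1 ≤ r) (f : Fin N → ℂ) (t : ℝ)
    (ht : lam ⟨1, by omega⟩ ^ (-(1 : ℝ) / 2) ≤ t) :
    Kfun u lam r f t ≤
      (4 / Real.pi * ((r : ℝ) + 3) ^ r * ((r : ℝ) + 1) + ((2 * Real.sin (1 / 2))⁻¹) ^ r) *
        omegaMod u lam r f t := by
  have hV := conjTranspose_eigvecMatrix_mul_self hu
  have ht0 : 0 < t := (Real.rpow_pos_of_pos hlam1 _).trans_le ht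
  have hgap : ∀ j, lam j ≠ 0 → 1 ≤ √(lam j) * t := fun j hj =>
    have hj1 : (⟨1, by omega⟩ : Fin N) ≤ j :=
      Fin.le_def.mpr (Nat.pos_of_ne_zero fun h => hj (hlam0 ▸ congrArg lam (Fin.ext h)))
    one_le_sqrt_mul_of_rpow_le hlam1 (hmono hj1) ht
  have hsin : 0 < sin (1 / 2) := sin_pos_of_pos_of_lt_pi (by norm_num) (by linarith [pi_gt_three])
  calc Kfun u lam r f t ≤ cnorm2 (f - kerProj u lam *ᵥ f) :=
        Kfun_le_cnorm2_sub_kerProj_mulVec hV lam (by omega) f ht0.le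
    _ ≤ 4 / π * ((r : ℝ) + 3) ^ r * ((r : ℝ) + 1) * omegaMod u lam r f t :=
        cnorm2_sub_kerProj_mulVec_le hV lam hr f ht0 hgap
    _ ≤ _ := mul_le_mul_of_nonneg_right (le_add_of_nonneg_right (by positivity))
        (omegaMod_nonneg hV lam r f ht0.le)
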